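/- arXiv:2103.15791 — 4 statements merged into one kernel-verified Lean document; each statement's English description precedes it below -/
import Mathlib

section
/- The series Σ_{ℓ=0}^{∞} 2^{-ℓ}/Q_ℓ converges and equals 1/Q_∞, where Q_∞ = ∏_{k=1}^{∞} (1 - 2^{-k}) (an infinite product converging to a positive real number). -/
/-!
With `P n = ∏_{k<n} (1 - q^(k+1))` one has `1/P (n+1) - 1/P n = q^(n+1)/P (n+1)`, so the partial
sums of `∑ q^l / P l` telescope to `1 / P n`. For `0 ≤ q < 1` the product converges to a nonzero
limit because `∑ q^(k+1)` converges, and the partial sums tend to its reciprocal.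
-/

/-- `Q m = ∏_{k=1}^{m} (1 - 2^{-k})` as a real number, with `Q 0 = 1`. -/
noncomputable def Q (m : ℕ) : ℝ :=
  ∏ k ∈ Finset.range m, (1 - 1 / 2 ^ (k + 1))

open Finset Filter

section NormedField

variable {K : Type*} [NormedField K] {q : K}

lemma summable_norm_neg_pow_succ (hq : ‖q‖ < 1) : Summable fun n : ℕ ↦ ‖-q ^ (n + 1)‖ := by
  simpa using (summable_nat_add_iff 1).mpr (summable_geometric_of_lt_one (norm_nonneg q) hq)

lemma multipliable_one_sub_pow_succ [CompleteSpace K] (hq : ‖q‖ < 1) :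
    Multipliable fun n : ℕ ↦ 1 - q ^ (n + 1) := by
  simpa only [← sub_eq_add_neg] using
    multipliable_one_add_of_summable (f := fun n : ℕ ↦ -q ^ (n + 1)) (summable_norm_neg_pow_succ hq)

lemma one_sub_pow_succ_ne_zero (hq : ‖q‖ < 1) (n : ℕ) : 1 - q ^ (n + 1) ≠ 0 := by
  refine sub_ne_zero.mpr fun h ↦ ?_
  have := pow_lt_one₀ (norm_nonneg q) hq n.succ_ne_zero
  rw [← norm_pow, ← h, norm_one] at this
  exact this.false

lemma tprod_one_sub_pow_succ_ne_zero [CompleteSpace K] (hq : ‖q‖ < 1) :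
    ∏' n : ℕ, (1 - q ^ (n + 1)) ≠ 0 := by
  have hfac (n : ℕ) : 1 + -q ^ (n + 1) ≠ 0 := by
    simpa only [← sub_eq_add_neg] using one_sub_pow_succ_ne_zero hq n
  simpa only [← sub_eq_add_neg] using
    tprod_one_add_ne_zero_of_summable hfac (summable_norm_neg_pow_succ hq)

end NormedField

lemma sum_range_succ_pow_div_prod_one_sub_pow {K : Type*} [Field K] (q : K)
    (hq : ∀ k : ℕ, 1 - q ^ (k + 1) ≠ 0) (n : ℕ) :
    ∑ l ∈ range (n + 1), q ^ l / ∏ k ∈ range l, (1 - q ^ (k + 1)) =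
      1 / ∏ k ∈ range n, (1 - q ^ (k + 1)) := by
  induction n with
  | zero => simp
  | succ n ih =>
    rw [sum_range_succ, ih, prod_range_succ]
    field_simp [hq n]
    ring

lemma hasSum_pow_div_prod_one_sub_pow {q : ℝ} (hq₀ : 0 ≤ q) (hq₁ : q < 1) :
    HasSum (fun l : ℕ ↦ q ^ l / ∏ k ∈ range l, (1 - q ^ (k + 1)))
      (1 / ∏' k : ℕ, (1 - q ^ (k + 1))) := by
  have hq : ‖q‖ < 1 := by rwa [Real.norm_of_nonneg hq₀]
  have hfac (k : ℕ) : 0 < 1 - q ^ (k + 1) := sub_pos.mpr (pow_lt_one₀ hq₀ hq₁ k.succ_ne_zero)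
  rw [hasSum_iff_tendsto_nat_of_nonneg fun l ↦ div_nonneg (pow_nonneg hq₀ l)
    (prod_nonneg fun k _ ↦ (hfac k).le), ← tendsto_add_atTop_iff_nat 1]
  simp only [sum_range_succ_pow_div_prod_one_sub_pow q fun k ↦ (hfac k).ne']
  exact tendsto_const_nhds.div (multipliable_one_sub_pow_succ hq).hasProd.tendsto_prod_nat
    (tprod_one_sub_pow_succ_ne_zero hq)

/-- The series `Σ_{ℓ≥0} 2^{-ℓ}/Q_ℓ` converges and equals `1/Q_∞`,
where `Q_∞ = ∏_{k=1}^{∞} (1 - 2^{-k})` (a convergent infinite product). -/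
theorem euler_series_Qinf :
    Multipliable (fun k : ℕ => (1 : ℝ) - 1 / 2 ^ (k + 1)) ∧
    HasSum (fun l : ℕ => (1 / 2 ^ l) / Q l)
      (1 / ∏' k : ℕ, ((1 : ℝ) - 1 / 2 ^ (k + 1))) := by
  have hq : ‖(1 / 2 : ℝ)‖ < 1 := by norm_num
  have h := hasSum_pow_div_prod_one_sub_pow (q := (1 / 2 : ℝ)) (by norm_num) (by norm_num)
  simp only [one_div_pow] at h
  exact ⟨by simpa only [one_div_pow] using multipliable_one_sub_pow_succ hq, h⟩
end

section
/- The series Σ_{ℓ=0}^{∞} ℓ · 2^{-ℓ}/Q_ℓ converges and equals α/Q_∞, where α := Σ_{k=1}^{∞} 1/(2^k - 1) and Q_∞ = ∏_{k=1}^{∞} (1 - 2^{-k}). -/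
open Filter Topology

lemma Q_zero : Q 0 = 1 := Finset.prod_range_zero _

lemma Q_succ (n : ℕ) : Q (n + 1) = Q n * (1 - 1 / 2 ^ (n + 1)) :=
  Finset.prod_range_succ _ n

lemma one_lt_two_pow_succ (n : ℕ) : (1 : ℝ) < 2 ^ (n + 1) :=
  one_lt_pow₀ one_lt_two n.succ_ne_zero

lemma one_sub_one_div_two_pow_pos (n : ℕ) : (0 : ℝ) < 1 - 1 / 2 ^ (n + 1) :=
  sub_pos.2 ((div_lt_one (by positivity)).2 (one_lt_two_pow_succ n))

lemma Q_pos (n : ℕ) : 0 < Q n :=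
  Finset.prod_pos fun k _ => one_sub_one_div_two_pow_pos k

lemma Q_antitone : Antitone Q :=
  antitone_nat_of_succ_le fun n => by
    rw [Q_succ]
    exact mul_le_of_le_one_right (Q_pos n).le (sub_le_self _ (by positivity))

lemma summable_log_one_sub_one_div_two_pow :
    Summable fun k : ℕ => Real.log (1 - 1 / 2 ^ (k + 1)) := by
  simp_rw [sub_eq_add_neg]
  refine Real.summable_log_one_add_of_summable (Summable.neg ?_)
  simp_rw [← one_div_pow]
  exact (summable_nat_add_iff 1).mpr summable_geometric_two

noncomputable def Qinf : ℝ := ∏' k : ℕ, (1 - 1 / 2 ^ (k + 1) : ℝ)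

lemma multipliable_one_sub_one_div_two_pow :
    Multipliable fun k : ℕ => (1 : ℝ) - 1 / 2 ^ (k + 1) :=
  Real.multipliable_of_summable_log one_sub_one_div_two_pow_pos
    summable_log_one_sub_one_div_two_pow

lemma Qinf_pos : 0 < Qinf := by
  rw [Qinf, ← Real.rexp_tsum_eq_tprod one_sub_one_div_two_pow_pos
    summable_log_one_sub_one_div_two_pow]
  exact Real.exp_pos _

lemma tendsto_Q_Qinf : Tendsto Q atTop (𝓝 Qinf) :=
  multipliable_one_sub_one_div_two_pow.hasProd.tendsto_prod_nat

lemma Qinf_le_Q (n : ℕ) : Qinf ≤ Q n :=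
  Q_antitone.le_of_tendsto tendsto_Q_Qinf n

noncomputable def qSeries (b : ℕ → ℝ) (w : ℝ) : ℝ := ∑' ℓ, b ℓ * w ^ ℓ / Q ℓ

section qSeries

variable {b c : ℕ → ℝ} {r w : ℝ}

lemma norm_qSeries_term_le (hw : |w| ≤ r) (ℓ : ℕ) :
    ‖b ℓ * w ^ ℓ / Q ℓ‖ ≤ |b ℓ| * r ^ ℓ / Qinf := by
  rw [norm_div, norm_mul, norm_pow, Real.norm_eq_abs, Real.norm_eq_abs, Real.norm_eq_abs,
    abs_of_pos (Q_pos ℓ)]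
  exact div_le_div₀ (mul_nonneg (abs_nonneg _) (pow_nonneg ((abs_nonneg w).trans hw) ℓ))
    (mul_le_mul_of_nonneg_left (pow_le_pow_left₀ (abs_nonneg w) hw ℓ) (abs_nonneg _))
    Qinf_pos (Qinf_le_Q ℓ)

lemma summable_qSeries (hb : Summable fun ℓ => |b ℓ| * r ^ ℓ) (hw : |w| ≤ r) :
    Summable fun ℓ => b ℓ * w ^ ℓ / Q ℓ :=
  (hb.div_const Qinf).of_norm_bounded (norm_qSeries_term_le hw)

lemma tendsto_qSeries_nhds_zero (hb : Summable fun ℓ => |b ℓ| * r ^ ℓ) (hr : 0 < r) :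
    Tendsto (qSeries b) (𝓝 0) (𝓝 (b 0)) := by
  have h_zero : ∑' ℓ, b ℓ * 0 ^ ℓ / Q ℓ = b 0 := by
    rw [tsum_eq_single 0 fun ℓ hℓ => by simp [hℓ]]
    simp [Q_zero]
  refine h_zero ▸ tendsto_tsum_of_dominated_convergence (hb.div_const Qinf)
    (fun ℓ => (by fun_prop : Continuous fun w : ℝ => b ℓ * w ^ ℓ / Q ℓ).tendsto 0) ?_
  filter_upwards [Metric.closedBall_mem_nhds 0 hr] with w hw
  exact norm_qSeries_term_le (by simpa using hw)

lemma qSeries_add (hb : Summable fun ℓ => b ℓ * w ^ ℓ / Q ℓ)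
    (hc : Summable fun ℓ => c ℓ * w ^ ℓ / Q ℓ) :
    qSeries (b + c) w = qSeries b w + qSeries c w := by
  simp only [qSeries, Pi.add_apply, add_mul, add_div]
  exact hb.tsum_add hc

lemma qSeries_div_two (hb : Summable fun ℓ => b ℓ * w ^ ℓ / Q ℓ)
    (hb_half : Summable fun ℓ => b ℓ * (w / 2) ^ ℓ / Q ℓ)
    (hb_succ : Summable fun ℓ => b (ℓ + 1) * w ^ ℓ / Q ℓ) :
    qSeries b (w / 2) = qSeries b w - w * qSeries (fun ℓ => b (ℓ + 1)) w := by
  have h_term (ℓ : ℕ) : b (ℓ + 1) * (w / 2) ^ (ℓ + 1) / Q (ℓ + 1) -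
      b (ℓ + 1) * w ^ (ℓ + 1) / Q (ℓ + 1) = -(w * (b (ℓ + 1) * w ^ ℓ / Q ℓ)) := by
    have h_pow : (w / 2) ^ (ℓ + 1) = w ^ (ℓ + 1) * (1 / 2 ^ (ℓ + 1)) := by rw [div_pow]; ring
    have := (one_sub_one_div_two_pow_pos ℓ).ne'
    have := (Q_pos ℓ).ne'
    rw [h_pow, Q_succ]
    generalize 1 / (2 : ℝ) ^ (ℓ + 1) = t at *
    field_simp
    ring
  have h_diff : HasSum (fun ℓ => b ℓ * (w / 2) ^ ℓ / Q ℓ - b ℓ * w ^ ℓ / Q ℓ)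
      (-(w * qSeries (fun ℓ => b (ℓ + 1)) w)) := by
    rw [← hasSum_nat_add_iff' 1]
    simpa [h_term, qSeries] using (hb_succ.hasSum.mul_left w).neg
  have := (hb_half.hasSum.sub hb.hasSum).unique h_diff
  simp only [qSeries] at this ⊢
  linarith

end qSeries

section EulerSeries

variable {r w : ℝ}

lemma summable_abs_one_mul_pow (hr₀ : 0 ≤ r) (hr : r < 1) :
    Summable fun ℓ => |(1 : ℕ → ℝ) ℓ| * r ^ ℓ := by
  simpa using summable_geometric_of_lt_one hr₀ hr

lemma summable_abs_natCast_mul_pow (hr₀ : 0 ≤ r) (hr : r < 1) :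
    Summable fun ℓ : ℕ => |(ℓ : ℝ)| * r ^ ℓ := by
  simpa using
    summable_pow_mul_geometric_of_norm_lt_one 1 (r := r) (by rwa [Real.norm_of_nonneg hr₀])

lemma abs_div_two_le_abs (w : ℝ) : |w / 2| ≤ |w| := by
  rw [abs_div, abs_two]
  linarith [abs_nonneg w]

lemma qSeries_one_div_two (hw : |w| < 1) : qSeries 1 (w / 2) = (1 - w) * qSeries 1 w := by
  have h_abs := summable_abs_one_mul_pow (abs_nonneg w) hw
  have h := summable_qSeries h_abs le_rfl
  rw [qSeries_div_two h (summable_qSeries h_abs (abs_div_two_le_abs w)) h]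
  change qSeries 1 w - w * qSeries 1 w = _
  ring

lemma qSeries_natCast_div_two (hw : |w| < 1) :
    qSeries Nat.cast (w / 2) = (1 - w) * qSeries Nat.cast w - w * qSeries 1 w := by
  have h_abs := summable_abs_natCast_mul_pow (abs_nonneg w) hw
  have h := summable_qSeries h_abs le_rfl
  have h_one := summable_qSeries (summable_abs_one_mul_pow (abs_nonneg w) hw) le_rfl
  have h_succ : (fun ℓ : ℕ => ((ℓ + 1 : ℕ) : ℝ)) = Nat.cast + 1 := by
    funext ℓ
    push_cast
    rfl
  have h_succ_summable : Summable fun ℓ : ℕ => ((ℓ + 1 : ℕ) : ℝ) * w ^ ℓ / Q ℓ := by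
    simpa [add_mul, add_div] using h.add h_one
  rw [qSeries_div_two h (summable_qSeries h_abs (abs_div_two_le_abs w)) h_succ_summable, h_succ,
    qSeries_add h h_one]
  ring

end EulerSeries

lemma hasSum_sub_succ_of_antitone {f : ℕ → ℝ} {l : ℝ} (hf : Antitone f)
    (hl : Tendsto f atTop (𝓝 l)) : HasSum (fun n => f n - f (n + 1)) (f 0 - l) := by
  refine (hasSum_iff_tendsto_nat_of_nonneg (fun n => sub_nonneg.2 (hf n.le_succ)) _).2 ?_
  simp_rw [Finset.sum_range_sub']
  exact tendsto_const_nhds.sub hl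

lemma tendsto_one_div_two_pow_succ : Tendsto (fun n : ℕ => (1 : ℝ) / 2 ^ (n + 1)) atTop (𝓝 0) :=
  tendsto_const_nhds.div_atTop
    ((tendsto_pow_atTop_atTop_of_one_lt one_lt_two).comp (tendsto_add_atTop_nat 1))

lemma abs_one_div_two_pow_succ_lt_one (n : ℕ) : |(1 : ℝ) / 2 ^ (n + 1)| < 1 := by
  rw [abs_of_pos (by positivity)]
  linarith [one_sub_one_div_two_pow_pos n]

lemma one_div_two_pow_succ_div_two (n : ℕ) : (1 : ℝ) / 2 ^ (n + 1) / 2 = 1 / 2 ^ (n + 2) := by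
  ring

lemma qSeries_one_one_div_two_pow (n : ℕ) :
    qSeries 1 (1 / 2 ^ (n + 1)) = Q n * qSeries 1 (1 / 2) := by
  induction n with
  | zero => norm_num [Q_zero]
  | succ n ih =>
    rw [← one_div_two_pow_succ_div_two, qSeries_one_div_two (abs_one_div_two_pow_succ_lt_one n),
      ih, Q_succ]
    ring

lemma qSeries_one_half : qSeries 1 (1 / 2) = Qinf⁻¹ := by
  refine eq_inv_of_mul_eq_one_right (tendsto_nhds_unique (tendsto_Q_Qinf.mul_const _) ?_)
  refine ((tendsto_qSeries_nhds_zero (summable_abs_one_mul_pow (r := 1 / 2) (by norm_num)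
    (by norm_num)) (by norm_num)).comp tendsto_one_div_two_pow_succ).congr fun n => ?_
  exact qSeries_one_one_div_two_pow n

lemma qSeries_natCast_div_Q_sub_succ (n : ℕ) :
    qSeries Nat.cast (1 / 2 ^ (n + 1)) / Q n - qSeries Nat.cast (1 / 2 ^ (n + 2)) / Q (n + 1) =
      Qinf⁻¹ / (2 ^ (n + 1) - 1) := by
  rw [← one_div_two_pow_succ_div_two, qSeries_natCast_div_two (abs_one_div_two_pow_succ_lt_one n),
    qSeries_one_one_div_two_pow, qSeries_one_half, Q_succ]
  have := (Q_pos n).ne'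
  have := (one_sub_one_div_two_pow_pos n).ne'
  have := (sub_pos.2 (one_lt_two_pow_succ n)).ne'
  field_simp
  ring

lemma hasSum_one_div_two_pow_succ_sub_one :
    HasSum (fun k : ℕ => (1 : ℝ) / (2 ^ (k + 1) - 1)) (Qinf * qSeries Nat.cast (1 / 2)) := by
  set x : ℕ → ℝ := fun n => qSeries Nat.cast (1 / 2 ^ (n + 1)) / Q n
  have hx_sub (n : ℕ) : x n - x (n + 1) = Qinf⁻¹ / (2 ^ (n + 1) - 1) :=
    qSeries_natCast_div_Q_sub_succ n
  have hx_antitone : Antitone x := antitone_nat_of_succ_le fun n => by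
    rw [← sub_nonneg, hx_sub]
    exact div_nonneg (inv_nonneg.2 Qinf_pos.le) (sub_nonneg.2 (one_le_pow₀ one_le_two))
  have hx_lim : Tendsto x atTop (𝓝 0) := by
    have h := ((tendsto_qSeries_nhds_zero (summable_abs_natCast_mul_pow (r := 1 / 2)
      (by norm_num) (by norm_num)) (by norm_num)).comp tendsto_one_div_two_pow_succ).div
      tendsto_Q_Qinf Qinf_pos.ne'
    rwa [Nat.cast_zero, zero_div] at h
  have h_term (k : ℕ) : Qinf * (x k - x (k + 1)) = 1 / (2 ^ (k + 1) - 1) := by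
    rw [hx_sub, mul_div_assoc', mul_inv_cancel₀ Qinf_pos.ne']
  have h_value : Qinf * (x 0 - 0) = Qinf * qSeries Nat.cast (1 / 2) := by
    norm_num [x, Q_zero]
  simpa only [h_term, h_value] using (hasSum_sub_succ_of_antitone hx_antitone hx_lim).mul_left Qinf

/-- The series `Σ_{ℓ≥0} ℓ·2^{-ℓ}/Q_ℓ` converges and equals `α/Q_∞`,
where `α = Σ_{k=1}^{∞} 1/(2^k - 1)` and `Q_∞ = ∏_{k=1}^{∞} (1 - 2^{-k})`. -/
theorem euler_series_alpha :
    Multipliable (fun k : ℕ => (1 : ℝ) - 1 / 2 ^ (k + 1)) ∧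
    Summable (fun k : ℕ => (1 : ℝ) / (2 ^ (k + 1) - 1)) ∧
    HasSum (fun l : ℕ => (l : ℝ) * (1 / 2 ^ l) / Q l)
      ((∑' k : ℕ, (1 : ℝ) / (2 ^ (k + 1) - 1)) /
        ∏' k : ℕ, ((1 : ℝ) - 1 / 2 ^ (k + 1))) := by
  refine ⟨multipliable_one_sub_one_div_two_pow, hasSum_one_div_two_pow_succ_sub_one.summable, ?_⟩
  rw [hasSum_one_div_two_pow_succ_sub_one.tsum_eq, ← Qinf, mul_div_cancel_left₀ _ Qinf_pos.ne']
  have h := summable_qSeries (summable_abs_natCast_mul_pow (r := 1 / 2) (by norm_num)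
    (by norm_num)) (w := 1 / 2) (by norm_num)
  simpa [qSeries, div_pow] using h.hasSum
end

section
/- Let p : ℕ × ℕ → ℝ be the state probabilities of the approximate counting Markov chain: p(0,1) = 1, p(0,ℓ) = 0 for ℓ ≠ 1, p(n,0) = 0 for all n, and p(n+1,ℓ) = (1 - 2^{-ℓ}) p(n,ℓ) + 2^{-(ℓ-1)} p(n,ℓ-1) for ℓ ≥ 1. Then for all integers n ≥ 0 and ℓ ≥ 1, p(n,ℓ) = Σ_{i=0}^{ℓ-1} ( (-1)^i · 2^{-i(i-1)/2} / (Q_i · Q_{ℓ-1-i}) ) · (1 - 2^{-(ℓ-i)})^n. -/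
/-!
The argument works for any `q` that is not a root of unity (here `q = 1/2`). Write `x_k = 1 - q^k`,
`a_i = (-1)^i q^{i(i-1)/2} / (q;q)_i` and `c_{m,i} = a_i / (q;q)_{m-i}`. Everything rests on
`a_{i+1} x_{i+1} = -q^i a_i`. It gives the termwise identity
`c_{m,i+1} x_{m-i} = x_{m+1} c_{m,i+1} + q^m c_{m-1,i}`, so the formula
`f(n, m+1) = ∑_{i ≤ m} c_{m,i} x_{m+1-i}^n` obeys the chain's recurrence; and it gives
`x_{m+1} T_{m+1} = x_m T_m` for `T_m = ∑_{i ≤ m} c_{m,i} = f(0, m+1)`, so `x_0 = 0` forces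
`T_m = 0` for `m ≥ 1`: `f` has the chain's initial values too.
-/

open Finset

namespace ApproximateCounting

variable {K : Type*} [Field K] {q : K}

def qPochhammer (q : K) (m : ℕ) : K :=
  ∏ k ∈ range m, (1 - q ^ (k + 1))

def altCoeff (q : K) (i : ℕ) : K :=
  (-1) ^ i * q ^ (i * (i - 1) / 2) / qPochhammer q i

def countingCoeff (q : K) (m i : ℕ) : K :=
  altCoeff q i / qPochhammer q (m - i)

def countingFormula (q : K) (n l : ℕ) : K :=
  ∑ i ∈ range l, countingCoeff q (l - 1) i * (1 - q ^ (l - i)) ^ n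

lemma qPochhammer_succ (m : ℕ) : qPochhammer q (m + 1) = qPochhammer q m * (1 - q ^ (m + 1)) :=
  prod_range_succ _ _

section NoRootOfUnity

variable (hq : ∀ k, q ^ (k + 1) ≠ 1)
include hq

lemma one_sub_pow_succ_ne_zero (k : ℕ) : 1 - q ^ (k + 1) ≠ 0 :=
  sub_ne_zero.mpr (hq k).symm

lemma qPochhammer_ne_zero (m : ℕ) : qPochhammer q m ≠ 0 :=
  prod_ne_zero_iff.mpr fun k _ ↦ one_sub_pow_succ_ne_zero hq k

lemma altCoeff_succ_mul (i : ℕ) :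
    altCoeff q (i + 1) * (1 - q ^ (i + 1)) = -q ^ i * altCoeff q i := by
  have := one_sub_pow_succ_ne_zero hq i
  have := qPochhammer_ne_zero hq i
  rw [altCoeff, altCoeff, qPochhammer_succ, Nat.triangle_succ]
  field_simp
  ring

lemma altCoeff_succ_mul_sub (j d : ℕ) :
    altCoeff q (j + 1) * (q ^ (j + d + 2) - q ^ (d + 1)) = q ^ (j + d + 1) * altCoeff q j := by
  linear_combination (-q ^ (d + 1)) * altCoeff_succ_mul hq j

lemma countingCoeff_succ_mul {m j : ℕ} (hj : j < m) :
    countingCoeff q m (j + 1) * (1 - q ^ (m - j)) =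
      (1 - q ^ (m + 1)) * countingCoeff q m (j + 1) + q ^ m * countingCoeff q (m - 1) j := by
  obtain ⟨d, rfl⟩ := Nat.exists_eq_add_of_lt hj
  simp only [countingCoeff, show j + d + 1 - (j + 1) = d by omega,
    show j + d + 1 - j = d + 1 by omega, show j + d + 1 - 1 - j = d by omega]
  linear_combination (1 / qPochhammer q d) * altCoeff_succ_mul_sub hq j d

lemma one_sub_pow_mul_countingCoeff_succ {m j : ℕ} (hj : j < m) :
    (1 - q ^ (m + 1)) * countingCoeff q (m + 1) (j + 1) =
      countingCoeff q m (j + 1) - q ^ m * countingCoeff q m j := by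
  obtain ⟨d, rfl⟩ := Nat.exists_eq_add_of_lt hj
  have := one_sub_pow_succ_ne_zero hq d
  have := qPochhammer_ne_zero hq d
  simp only [countingCoeff, show j + d + 1 + 1 - (j + 1) = d + 1 by omega,
    show j + d + 1 - (j + 1) = d by omega, show j + d + 1 - j = d + 1 by omega, qPochhammer_succ]
  field_simp
  linear_combination -altCoeff_succ_mul_sub hq j d

lemma one_sub_pow_mul_sum_countingCoeff_succ (m : ℕ) :
    (1 - q ^ (m + 1)) * ∑ i ∈ range (m + 2), countingCoeff q (m + 1) i =
      (1 - q ^ m) * ∑ i ∈ range (m + 1), countingCoeff q m i := by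
  have first : (1 - q ^ (m + 1)) * countingCoeff q (m + 1) 0 = countingCoeff q m 0 := by
    have := qPochhammer_ne_zero hq m
    have := one_sub_pow_succ_ne_zero hq m
    simp only [countingCoeff, Nat.sub_zero, qPochhammer_succ]
    field_simp
  have last :
      (1 - q ^ (m + 1)) * countingCoeff q (m + 1) (m + 1) = -q ^ m * countingCoeff q m m := by
    simp only [countingCoeff, Nat.sub_self, div_one, qPochhammer, prod_range_zero]
    linear_combination altCoeff_succ_mul hq m
  have middle : ∀ j ∈ range m, (1 - q ^ (m + 1)) * countingCoeff q (m + 1) (j + 1) =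
      countingCoeff q m (j + 1) - q ^ m * countingCoeff q m j :=
    fun j hj ↦ one_sub_pow_mul_countingCoeff_succ hq (mem_range.mp hj)
  rw [mul_sum, sum_range_succ, sum_range_succ', sum_congr rfl middle, sum_sub_distrib, ← mul_sum,
    first, last]
  linear_combination q ^ m * sum_range_succ (countingCoeff q m) m -
    sum_range_succ' (countingCoeff q m) m

lemma sum_countingCoeff (m : ℕ) :
    ∑ i ∈ range (m + 1), countingCoeff q m i = if m = 0 then 1 else 0 := by
  have vanish : ∀ k : ℕ, (1 - q ^ k) * ∑ i ∈ range (k + 1), countingCoeff q k i = 0 := by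
    intro k
    induction k with
    | zero => simp
    | succ k ih => rw [one_sub_pow_mul_sum_countingCoeff_succ hq, ih]
  cases m with
  | zero => simp [countingCoeff, altCoeff, qPochhammer]
  | succ m => simpa [one_sub_pow_succ_ne_zero hq m] using vanish (m + 1)

lemma countingFormula_zero_left (l : ℕ) : countingFormula q 0 l = if l = 1 then 1 else 0 := by
  cases l with
  | zero => simp [countingFormula]
  | succ m => simpa [countingFormula] using sum_countingCoeff hq m

lemma countingFormula_succ (n m : ℕ) :
    countingFormula q (n + 1) (m + 1) =
      (1 - q ^ (m + 1)) * countingFormula q n (m + 1) + q ^ m * countingFormula q n m := by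
  have middle : ∀ j ∈ range m, countingCoeff q m (j + 1) * (1 - q ^ (m - j)) ^ (n + 1) =
      (1 - q ^ (m + 1)) * (countingCoeff q m (j + 1) * (1 - q ^ (m - j)) ^ n) +
        q ^ m * (countingCoeff q (m - 1) j * (1 - q ^ (m - j)) ^ n) := by
    intro j hj
    linear_combination (1 - q ^ (m - j)) ^ n * countingCoeff_succ_mul hq (mem_range.mp hj)
  simp only [countingFormula, Nat.add_sub_cancel, sum_range_succ' _ m, Nat.add_sub_add_right,
    Nat.sub_zero]
  rw [sum_congr rfl middle, sum_add_distrib, ← mul_sum, ← mul_sum]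
  ring

end NoRootOfUnity

end ApproximateCounting

open ApproximateCounting

lemma half_pow_succ_ne_one (k : ℕ) : (1 / 2 : ℝ) ^ (k + 1) ≠ 1 :=
  (pow_lt_one₀ (by norm_num) (by norm_num) k.succ_ne_zero).ne

lemma Q_eq_qPochhammer (m : ℕ) : Q m = qPochhammer (1 / 2 : ℝ) m := by
  simp [Q, qPochhammer]

/-- For the approximate-counting Markov chain with `p 0 1 = 1`,
`p 0 ℓ = 0` for `ℓ ≠ 1`, `p n 0 = 0` and
`p (n+1) ℓ = (1 - 2^{-ℓ}) p n ℓ + 2^{-(ℓ-1)} p n (ℓ-1)` for `ℓ ≥ 1`, we have,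
for all `n ≥ 0` and `ℓ ≥ 1`,
`p n ℓ = Σ_{i=0}^{ℓ-1} ((-1)^i 2^{-i(i-1)/2} / (Q_i Q_{ℓ-1-i})) (1 - 2^{-(ℓ-i)})^n`. -/
theorem approximate_counting_probabilities
    (p : ℕ → ℕ → ℝ)
    (h01 : p 0 1 = 1) (h0 : ∀ l : ℕ, l ≠ 1 → p 0 l = 0)
    (hz : ∀ n : ℕ, p n 0 = 0)
    (hrec : ∀ n m : ℕ,
      p (n + 1) (m + 1) = (1 - 1 / 2 ^ (m + 1)) * p n (m + 1) + (1 / 2 ^ m) * p n m) :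
    ∀ n l : ℕ, 1 ≤ l →
      p n l = ∑ i ∈ Finset.range l,
        ((-1 : ℝ) ^ i * (1 / 2 ^ (i * (i - 1) / 2)) / (Q i * Q (l - 1 - i))) *
          (1 - 1 / 2 ^ (l - i)) ^ n := by
  have hp : ∀ n l, p n l = countingFormula (1 / 2 : ℝ) n l := by
    intro n
    induction n with
    | zero =>
      intro l
      rw [countingFormula_zero_left half_pow_succ_ne_one]
      split_ifs with hl
      · exact hl ▸ h01
      · exact h0 l hl
    | succ n ih =>
      rintro (_ | m)
      · simp [hz, countingFormula]
      · rw [hrec, countingFormula_succ half_pow_succ_ne_one, ih, ih, one_div_pow, one_div_pow]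
  intro n l _
  simp [hp, countingFormula, countingCoeff, altCoeff, Q_eq_qPochhammer, div_div]
end

section
/- Let p : ℕ × ℕ → ℝ be defined by p(0,1) = 1, p(0,ℓ) = 0 for ℓ ≠ 1, p(n,0) = 0 for all n, and p(n+1,ℓ) = (1 - 2^{-ℓ}) p(n,ℓ) + 2^{-(ℓ-1)} p(n,ℓ-1) for ℓ ≥ 1. Then for every integer n ≥ 0, the mean counter value C_n := Σ_{ℓ=1}^{n+1} ℓ · p(n,ℓ) satisfies C_n = 1 - Σ_{k=1}^{n} (-1)^k C(n,k) 2^{-k} Q_{k-1}. -/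
/-!
Write `X_n` for the counter after `n` increments and `G_n x = 𝔼[x ^ X_n]`. Conditioning on the
last increment gives `G_{n+1} x = G_n x + (x - 1) G_n (x / 2)`, i.e. `G_{n+1} = (1 + E) G_n` for
the operator `(E f) x = (x - 1) f (x / 2)`, so the binomial theorem gives
`G_n = ∑_k C(n,k) E^k id`, with `E^k id` an explicit product. The mean grows by the probability
of an increment, `C_{n+1} = C_n + G_n (1/2)`, and `(E^k id) (1/2) = (-1)^k Q_k / 2^(k+1)`;
Pascal's rule sums these increments into the closed form.
-/

open Finset

section Sums

variable {M : Type*} [AddCommMonoid M]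

theorem sum_Icc_one_eq_sum_range (f : ℕ → M) (m : ℕ) :
    ∑ k ∈ Icc 1 m, f k = ∑ k ∈ range m, f (k + 1) := by
  rw [range_eq_Ico, sum_Ico_add', zero_add, Ico_add_one_right_eq_Icc]

theorem sum_range_choose_succ_succ_smul (f : ℕ → M) (n : ℕ) :
    ∑ k ∈ range (n + 1), (n + 1).choose (k + 1) • f k =
      ∑ k ∈ range (n + 1), n.choose k • f k + ∑ k ∈ range n, n.choose (k + 1) • f k := by
  simp only [Nat.choose_succ_succ, add_smul, sum_add_distrib]
  rw [sum_range_succ (fun k => n.choose (k + 1) • f k), Nat.choose_succ_self, zero_smul,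
    add_zero]

theorem sum_range_choose_succ_smul (f : ℕ → M) (n : ℕ) :
    ∑ k ∈ range (n + 2), (n + 1).choose k • f k =
      ∑ k ∈ range (n + 1), n.choose k • (f k + f (k + 1)) := by
  rw [sum_range_succ', sum_range_choose_succ_succ_smul]
  simp only [smul_add, sum_add_distrib]
  rw [sum_range_succ' (fun k => n.choose k • f k), Nat.choose_zero_right, Nat.choose_zero_right]
  abel

end Sums

/-- `pgfBasis k` is `E^k id` for the operator `(E f) x = (x - 1) * f (x / 2)`. -/
noncomputable def pgfBasis (k : ℕ) (x : ℝ) : ℝ :=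
  x / 2 ^ k * ∏ i ∈ range k, (x / 2 ^ i - 1)

theorem pgfBasis_zero (x : ℝ) : pgfBasis 0 x = x := by
  simp [pgfBasis]

theorem pgfBasis_succ (k : ℕ) (x : ℝ) : pgfBasis (k + 1) x = (x - 1) * pgfBasis k (x / 2) := by
  simp only [pgfBasis, prod_range_succ', div_div, ← pow_succ', pow_zero, div_one]
  ring

theorem pgfBasis_half (k : ℕ) : pgfBasis k (1 / 2) = (-1) ^ k / 2 ^ (k + 1) * Q k := by
  have hfactor (i : ℕ) : (1 / 2 : ℝ) / 2 ^ i - 1 = -(1 - 1 / 2 ^ (i + 1)) := by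
    rw [div_div, ← pow_succ']
    ring
  rw [pgfBasis, div_div, ← pow_succ']
  simp only [hfactor]
  rw [prod_neg, card_range, Q]
  ring

theorem eq_sum_choose_mul_pgfBasis {G : ℕ → ℝ → ℝ} (h0 : ∀ x, G 0 x = x)
    (hsucc : ∀ n x, G (n + 1) x = G n x + (x - 1) * G n (x / 2)) (n : ℕ) (x : ℝ) :
    G n x = ∑ k ∈ range (n + 1), n.choose k * pgfBasis k x := by
  induction n generalizing x with
  | zero => simp [h0, pgfBasis_zero]
  | succ n ih =>
    simp only [← nsmul_eq_mul] at ih ⊢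
    rw [sum_range_choose_succ_smul, hsucc, ih, ih, mul_sum]
    simp only [pgfBasis_succ, smul_add, sum_add_distrib, mul_smul_comm]

structure IsCounterLaw (p : ℕ → ℕ → ℝ) : Prop where
  initial_one : p 0 1 = 1
  initial_of_ne : ∀ l, l ≠ 1 → p 0 l = 0
  at_zero : ∀ n, p n 0 = 0
  step : ∀ n m, p (n + 1) (m + 1) = (1 - 1 / 2 ^ (m + 1)) * p n (m + 1) + 1 / 2 ^ m * p n m

/-- `𝔼[w X_n]`; the range `n + 2` contains the support `[1, n + 1]` of `p n`. -/
noncomputable def counterExpect (p : ℕ → ℕ → ℝ) (n : ℕ) (w : ℕ → ℝ) : ℝ :=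
  ∑ l ∈ range (n + 2), w l * p n l

namespace IsCounterLaw

variable {p : ℕ → ℕ → ℝ}

theorem eq_zero_of_lt (hp : IsCounterLaw p) {n l : ℕ} (h : n + 1 < l) : p n l = 0 := by
  induction n generalizing l with
  | zero => exact hp.initial_of_ne l (by omega)
  | succ n ih =>
    obtain ⟨m, rfl⟩ : ∃ m, l = m + 1 := ⟨l - 1, by omega⟩
    rw [hp.step, ih (by omega), ih (by omega)]
    ring

theorem counterExpect_zero (hp : IsCounterLaw p) (w : ℕ → ℝ) : counterExpect p 0 w = w 1 := by
  simp [counterExpect, sum_range_succ, hp.initial_one, hp.at_zero]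

/-- One increment moves the counter from `l` to `l + 1` with probability `2⁻ˡ`. -/
theorem counterExpect_succ (hp : IsCounterLaw p) (w : ℕ → ℝ) (n : ℕ) :
    counterExpect p (n + 1) w = counterExpect p n (fun l => w l + (w (l + 1) - w l) / 2 ^ l) := by
  have hshift (g : ℕ → ℝ) (hbot : g 0 = 0) (htop : g (n + 2) = 0) :
      ∑ m ∈ range (n + 2), g (m + 1) = ∑ l ∈ range (n + 2), g l := by
    rw [← add_zero (∑ m ∈ range (n + 2), g (m + 1)), ← hbot, ← sum_range_succ', sum_range_succ,
      htop, add_zero]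
  calc counterExpect p (n + 1) w = ∑ m ∈ range (n + 2), w (m + 1) * p (n + 1) (m + 1) := by
        rw [counterExpect, sum_range_succ', hp.at_zero, mul_zero, add_zero]
    _ = ∑ m ∈ range (n + 2), w (m + 1) * (1 - 1 / 2 ^ (m + 1)) * p n (m + 1) +
          ∑ m ∈ range (n + 2), w (m + 1) / 2 ^ m * p n m := by
        rw [← sum_add_distrib]
        refine sum_congr rfl fun m _ => ?_
        rw [hp.step]
        ring
    _ = ∑ l ∈ range (n + 2), w l * (1 - 1 / 2 ^ l) * p n l +
          ∑ m ∈ range (n + 2), w (m + 1) / 2 ^ m * p n m := by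
        rw [hshift (fun l => w l * (1 - 1 / 2 ^ l) * p n l) (by simp)
          (by simp [hp.eq_zero_of_lt])]
    _ = counterExpect p n (fun l => w l + (w (l + 1) - w l) / 2 ^ l) := by
        rw [counterExpect, ← sum_add_distrib]
        refine sum_congr rfl fun l _ => ?_
        ring

theorem pgf_succ (hp : IsCounterLaw p) (n : ℕ) (x : ℝ) :
    counterExpect p (n + 1) (x ^ ·) =
      counterExpect p n (x ^ ·) + (x - 1) * counterExpect p n ((x / 2) ^ ·) := by
  rw [hp.counterExpect_succ, counterExpect, counterExpect, counterExpect, mul_sum,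
    ← sum_add_distrib]
  refine sum_congr rfl fun l _ => ?_
  rw [div_pow]
  ring

theorem mean_succ (hp : IsCounterLaw p) (n : ℕ) :
    counterExpect p (n + 1) (↑·) = counterExpect p n (↑·) + counterExpect p n ((1 / 2) ^ ·) := by
  rw [hp.counterExpect_succ, counterExpect, counterExpect, counterExpect, ← sum_add_distrib]
  refine sum_congr rfl fun l _ => ?_
  push_cast
  rw [div_pow, one_pow]
  ring

theorem pgf_eq_sum_choose_mul_pgfBasis (hp : IsCounterLaw p) (n : ℕ) (x : ℝ) :
    counterExpect p n (x ^ ·) = ∑ k ∈ range (n + 1), n.choose k * pgfBasis k x :=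
  eq_sum_choose_mul_pgfBasis (G := fun n x => counterExpect p n (x ^ ·))
    (fun x => by simp [hp.counterExpect_zero]) hp.pgf_succ n x

theorem mean_eq (hp : IsCounterLaw p) (n : ℕ) :
    counterExpect p n (↑·) =
      1 + ∑ k ∈ range n, n.choose (k + 1) * ((-1) ^ k / 2 ^ (k + 1) * Q k) := by
  induction n with
  | zero => simp [hp.counterExpect_zero]
  | succ n ih =>
    simp only [← nsmul_eq_mul] at ih ⊢
    rw [hp.mean_succ, ih, hp.pgf_eq_sum_choose_mul_pgfBasis, sum_range_choose_succ_succ_smul]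
    simp only [pgfBasis_half, nsmul_eq_mul]
    ring

end IsCounterLaw

/-- For the approximate-counting Markov chain with `p 0 1 = 1`,
`p 0 ℓ = 0` for `ℓ ≠ 1`, `p n 0 = 0` and
`p (n+1) ℓ = (1 - 2^{-ℓ}) p n ℓ + 2^{-(ℓ-1)} p n (ℓ-1)` for `ℓ ≥ 1`, the mean
counter value `C_n = Σ_{ℓ=1}^{n+1} ℓ p(n,ℓ)` satisfies, for every `n ≥ 0`,
`C_n = 1 - Σ_{k=1}^{n} (-1)^k C(n,k) 2^{-k} Q_{k-1}`. -/
theorem approximate_counting_mean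
    (p : ℕ → ℕ → ℝ)
    (h01 : p 0 1 = 1) (h0 : ∀ l : ℕ, l ≠ 1 → p 0 l = 0)
    (hz : ∀ n : ℕ, p n 0 = 0)
    (hrec : ∀ n m : ℕ,
      p (n + 1) (m + 1) = (1 - 1 / 2 ^ (m + 1)) * p n (m + 1) + (1 / 2 ^ m) * p n m) :
    ∀ n : ℕ,
      (∑ l ∈ Finset.Icc 1 (n + 1), (l : ℝ) * p n l) =
        1 - ∑ k ∈ Finset.Icc 1 n,
          (-1 : ℝ) ^ k * (n.choose k : ℝ) * (1 / 2 ^ k) * Q (k - 1) := by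
  intro n
  have hmean := IsCounterLaw.mean_eq ⟨h01, h0, hz, hrec⟩ n
  rw [counterExpect, sum_range_succ', Nat.cast_zero, zero_mul, add_zero] at hmean
  rw [sum_Icc_one_eq_sum_range, sum_Icc_one_eq_sum_range, hmean, sub_eq_add_neg,
    ← sum_neg_distrib]
  congr 1
  refine sum_congr rfl fun k _ => ?_
  rw [Nat.add_sub_cancel, pow_succ]
  ring
end
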